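/- arXiv:math/0501188 — 2 statements merged into one kernel-verified Lean document; each statement's English description precedes it below -/
import Mathlib

section
/- Let H > 0 and c ∈ ℝ. Then lim_{t → ∞} h(t; H, c) = 1 and lim_{t → ∞} f(t; H, c)/t = 1; that is, the rotational spacelike surface of constant mean curvature H ≠ 0 is asymptotic to a light cone at infinity. -/
open Real MeasureTheory Filter Set

/-- The derivative `h(t; H, c) = (H t² − c)/√(t² + (H t² − c)²)` of the profile curve of a
rotational spacelike surface with constant mean curvature `H` and first-integral constant `c`. -/
noncomputable def hfun (H c t : ℝ) : ℝ :=
  (H * t ^ 2 - c) / Real.sqrt (t ^ 2 + (H * t ^ 2 - c) ^ 2)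

/-- The profile function `f(t; H, c) = a + ∫_r^t h(s; H, c) ds` with initial value `f(r) = a`,
whose rotational graph `X(t, θ) = (t cos θ, t sin θ, f(t))` has constant mean curvature `H`. -/
noncomputable def ffun (H c r a t : ℝ) : ℝ :=
  a + ∫ s in r..t, hfun H c s

lemma hfun_contAt (H c : ℝ) {t : ℝ} (ht : t ≠ 0) : ContinuousAt (hfun H c) t := by
  have hpos : 0 < t ^ 2 + (H * t ^ 2 - c) ^ 2 := by positivity
  unfold hfun
  apply ContinuousAt.div
  · fun_prop
  · exact Real.continuous_sqrt.continuousAt.comp (by fun_prop)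
  · exact (Real.sqrt_pos.mpr hpos).ne'

lemma hfun_intInt (H c : ℝ) {x y : ℝ} (hx : 0 < x) (hxy : x ≤ y) :
    IntervalIntegrable (hfun H c) volume x y := by
  apply ContinuousOn.intervalIntegrable
  intro s hs
  rw [uIcc_of_le hxy] at hs
  exact (hfun_contAt H c (lt_of_lt_of_le hx hs.1).ne').continuousWithinAt

lemma tendsto_hfun (H c : ℝ) (hH : 0 < H) :
    Tendsto (fun t => hfun H c t) atTop (nhds 1) := by
  have h0 : Tendsto (fun t : ℝ => (t⁻¹) ^ 2) atTop (nhds 0) := by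
    simpa using (tendsto_inv_atTop_zero (𝕜 := ℝ)).pow 2
  have h1 : Tendsto (fun t : ℝ => H - c * (t⁻¹) ^ 2) atTop (nhds H) := by
    simpa using tendsto_const_nhds.sub (h0.const_mul c)
  have h2 : Tendsto (fun t : ℝ => (t⁻¹) ^ 2 + (H - c * (t⁻¹) ^ 2) ^ 2) atTop (nhds (H ^ 2)) := by
    simpa using h0.add (h1.pow 2)
  have h3 : Tendsto (fun t : ℝ => Real.sqrt ((t⁻¹) ^ 2 + (H - c * (t⁻¹) ^ 2) ^ 2))
      atTop (nhds H) := by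
    have := (Real.continuous_sqrt.tendsto (H ^ 2)).comp h2
    simpa [Function.comp_def, Real.sqrt_sq hH.le] using this
  have h4 : Tendsto (fun t : ℝ =>
      (H - c * (t⁻¹) ^ 2) / Real.sqrt ((t⁻¹) ^ 2 + (H - c * (t⁻¹) ^ 2) ^ 2)) atTop (nhds 1) := by
    have := h1.div h3 hH.ne'
    simpa [div_self hH.ne', Pi.div_def] using this
  apply Tendsto.congr' _ h4
  filter_upwards [eventually_gt_atTop 0] with t ht
  have ht2 : (0:ℝ) < t ^ 2 := by positivity
  have e1 : H * t ^ 2 - c = t ^ 2 * (H - c * (t⁻¹) ^ 2) := by field_simp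
  have e2 : t ^ 2 + (H * t ^ 2 - c) ^ 2
      = (t ^ 2) ^ 2 * ((t⁻¹) ^ 2 + (H - c * (t⁻¹) ^ 2) ^ 2) := by
    field_simp
  unfold hfun
  rw [e2, e1, Real.sqrt_mul (by positivity), Real.sqrt_sq ht2.le,
    mul_div_mul_left _ _ ht2.ne']

lemma abs_hfun_le_one (H c t : ℝ) : |hfun H c t| ≤ 1 := by
  unfold hfun
  rw [abs_div, abs_of_nonneg (Real.sqrt_nonneg _)]
  apply div_le_one_of_le₀
  · rw [← Real.sqrt_sq_eq_abs]
    exact Real.sqrt_le_sqrt (le_add_of_nonneg_left (sq_nonneg t))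
  · exact Real.sqrt_nonneg _

lemma cesaro (H c r : ℝ) (hr : 0 < r) (hH : 0 < H) :
    Tendsto (fun t => (∫ s in r..t, (hfun H c s - 1)) / t) atTop (nhds 0) := by
  rw [Metric.tendsto_atTop]
  intro ε hε
  obtain ⟨T₀, hT₀⟩ := (Metric.tendsto_atTop.mp (tendsto_hfun H c hH)) (ε / 2) (by positivity)
  set T := max T₀ r with hT
  have hrT : r ≤ T := le_max_right _ _
  set C := |∫ s in r..T, (hfun H c s - 1)| with hC
  have hCnonneg : 0 ≤ C := abs_nonneg _
  refine ⟨max (T + 1) (2 * (C + 1) / ε), fun t ht => ?_⟩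
  have ht1 : T + 1 ≤ t := le_trans (le_max_left _ _) ht
  have ht2 : 2 * (C + 1) / ε ≤ t := le_trans (le_max_right _ _) ht
  have htT : T ≤ t := by linarith
  have hrpos := hr
  have hTpos : 0 < T := lt_of_lt_of_le hr hrT
  have htpos : 0 < t := by linarith
  have i1 : IntervalIntegrable (fun s => hfun H c s - 1) volume r T :=
    (hfun_intInt H c hr hrT).sub intervalIntegrable_const
  have i2 : IntervalIntegrable (fun s => hfun H c s - 1) volume T t :=
    (hfun_intInt H c hTpos htT).sub intervalIntegrable_const
  have split : (∫ s in r..t, (hfun H c s - 1)) =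
      (∫ s in r..T, (hfun H c s - 1)) + ∫ s in T..t, (hfun H c s - 1) :=
    (intervalIntegral.integral_add_adjacent_intervals i1 i2).symm
  have bound2 : |∫ s in T..t, (hfun H c s - 1)| ≤ ε / 2 * t := by
    have h := intervalIntegral.norm_integral_le_of_norm_le_const
      (C := ε / 2) (f := fun s => hfun H c s - 1) (a := T) (b := t) ?_
    · rw [Real.norm_eq_abs] at h
      have : |t - T| = t - T := abs_of_nonneg (by linarith)
      rw [this] at h
      nlinarith
    · intro s hs
      rw [Set.uIoc_of_le htT] at hs
      have hsT₀ : T₀ ≤ s := le_trans (le_max_left _ _) hs.1.le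
      have := hT₀ s hsT₀
      rw [Real.dist_eq] at this
      rw [Real.norm_eq_abs]
      exact this.le
  have hCt : C < ε / 2 * t := by
    have h2 : 2 * (C + 1) ≤ t * ε := (div_le_iff₀ hε).mp ht2
    nlinarith
  rw [Real.dist_eq, sub_zero, abs_div, abs_of_pos htpos, div_lt_iff₀ htpos]
  calc |∫ s in r..t, (hfun H c s - 1)|
      ≤ C + |∫ s in T..t, (hfun H c s - 1)| := by rw [split]; exact abs_add_le _ _
    _ ≤ C + ε / 2 * t := by linarith
    _ < ε * t := by nlinarith

/-- Let `H > 0` and `c ∈ ℝ`.  Then `lim_{t → ∞} h(t; H, c) = 1` and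
`lim_{t → ∞} f(t; H, c)/t = 1`; that is, the rotational spacelike surface of nonzero constant
mean curvature `H` is asymptotic to a light cone at infinity. -/
theorem asymptotic_lightcone (H c r a : ℝ) (hH : 0 < H) (hr : 0 < r) :
    Tendsto (fun t => hfun H c t) atTop (nhds 1) ∧
    Tendsto (fun t => ffun H c r a t / t) atTop (nhds 1) := by
  refine ⟨tendsto_hfun H c hH, ?_⟩
  have h1 := cesaro H c r hr hH
  have h2 : Tendsto (fun t : ℝ => (a - r) / t) atTop (nhds 0) :=
    Tendsto.div_atTop tendsto_const_nhds tendsto_id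
  have h3 : Tendsto (fun t => (a - r) / t + (∫ s in r..t, (hfun H c s - 1)) / t + 1)
      atTop (nhds 1) := by
    simpa using (h2.add h1).add (tendsto_const_nhds (x := (1:ℝ)))
  apply Tendsto.congr' _ h3
  filter_upwards [eventually_ge_atTop (max r 1)] with t ht
  have htr : r ≤ t := le_trans (le_max_left _ _) ht
  have htpos : (0:ℝ) < t := lt_of_lt_of_le one_pos (le_trans (le_max_right _ _) ht)
  have hint : IntervalIntegrable (hfun H c) volume r t := hfun_intInt H c hr htr
  have esub : (∫ s in r..t, (hfun H c s - 1)) = (∫ s in r..t, hfun H c s) - (t - r) := by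
    rw [intervalIntegral.integral_sub hint intervalIntegrable_const]
    simp
  rw [esub]
  unfold ffun
  field_simp
  ring
end

section
/- Let 0 < r < R and a, b ∈ ℝ with |b − a| < R − r, and set H₀ = 2(b − a)/√(((R − r)² − (b − a)²)·((R + r)² − (b − a)²)). Then for every H > 0 with H > H₀ there exists a unique c > 0 such that the profile f(t; H, c) with f(r) = a satisfies f(R; H, c) = b; that is, there is a unique rotational spacelike surface with constant mean curvature H, corresponding to a positive first-integral constant c, spanning Γ(r, a) and Γ(R, b). -/
open Real MeasureTheory Filter Set

lemma phi_mono {k x y : ℝ} (hk : 0 < k) (hxy : x < y) :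
    x / Real.sqrt (k + x ^ 2) < y / Real.sqrt (k + y ^ 2) := by
  have hx : 0 < k + x ^ 2 := by positivity
  have hy : 0 < k + y ^ 2 := by positivity
  have sx : 0 < Real.sqrt (k + x ^ 2) := Real.sqrt_pos.2 hx
  have sy : 0 < Real.sqrt (k + y ^ 2) := Real.sqrt_pos.2 hy
  have sx2 : Real.sqrt (k + x ^ 2) ^ 2 = k + x ^ 2 := Real.sq_sqrt hx.le
  have sy2 : Real.sqrt (k + y ^ 2) ^ 2 = k + y ^ 2 := Real.sq_sqrt hy.le
  rw [div_lt_div_iff₀ sx sy]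
  rcases le_or_gt 0 x with h0x | h0x
  · have hy0 : 0 < y := lt_of_le_of_lt h0x hxy
    have hsq : x ^ 2 < y ^ 2 := by nlinarith
    have h1 : (x * Real.sqrt (k + y ^ 2)) ^ 2 < (y * Real.sqrt (k + x ^ 2)) ^ 2 := by
      have e1 : (x * Real.sqrt (k + y ^ 2)) ^ 2 = x ^ 2 * (k + y ^ 2) := by
        rw [mul_pow, sy2]
      have e2 : (y * Real.sqrt (k + x ^ 2)) ^ 2 = y ^ 2 * (k + x ^ 2) := by
        rw [mul_pow, sx2]
      rw [e1, e2]
      nlinarith [mul_lt_mul_of_pos_left hsq hk]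
    exact lt_of_pow_lt_pow_left₀ 2 (by positivity) h1
  · rcases lt_or_ge 0 y with h0y | h0y
    · have t1 : x * Real.sqrt (k + y ^ 2) < 0 := mul_neg_of_neg_of_pos h0x sy
      have t2 : 0 < y * Real.sqrt (k + x ^ 2) := mul_pos h0y sx
      linarith
    · have hsq : y ^ 2 < x ^ 2 := by nlinarith
      have h1 : (-(y * Real.sqrt (k + x ^ 2))) ^ 2 < (-(x * Real.sqrt (k + y ^ 2))) ^ 2 := by
        have e1 : (-(y * Real.sqrt (k + x ^ 2))) ^ 2 = y ^ 2 * (k + x ^ 2) := by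
          rw [neg_sq, mul_pow, sx2]
        have e2 : (-(x * Real.sqrt (k + y ^ 2))) ^ 2 = x ^ 2 * (k + y ^ 2) := by
          rw [neg_sq, mul_pow, sy2]
        rw [e1, e2]
        nlinarith [mul_lt_mul_of_pos_left hsq hk]
      have h2 := lt_of_pow_lt_pow_left₀ 2
        (by nlinarith [mul_nonneg (neg_nonneg.2 h0x.le) sy.le]) h1
      linarith

-- pointwise antitone in c
lemma hfun_anti {H c₁ c₂ s : ℝ} (hs : 0 < s) (h : c₁ < c₂) :
    hfun H c₂ s < hfun H c₁ s := by
  have := phi_mono (k := s ^ 2) (x := H * s ^ 2 - c₂) (y := H * s ^ 2 - c₁)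
    (by positivity) (by linarith)
  simpa [hfun] using this

-- continuity on positive reals
lemma hfun_contOn {H c r R : ℝ} (hr : 0 < r) : ContinuousOn (hfun H c) (Set.Icc r R) := by
  apply ContinuousOn.div
  · fun_prop
  · fun_prop
  · intro s hs
    have hs0 : 0 < s := lt_of_lt_of_le hr hs.1
    have : (0:ℝ) < s ^ 2 + (H * s ^ 2 - c) ^ 2 := by positivity
    exact ne_of_gt (Real.sqrt_pos.2 this)

lemma hfun_integrable {H c r R : ℝ} (hr : 0 < r) (hrR : r ≤ R) :
    IntervalIntegrable (hfun H c) volume r R := by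
  apply ContinuousOn.intervalIntegrable
  rw [Set.uIcc_of_le hrR]
  exact hfun_contOn hr

-- continuity of c ↦ ∫
lemma G_continuous {H r R : ℝ} (hr : 0 < r) (hrR : r ≤ R) :
    Continuous fun c => ∫ s in r..R, hfun H c s := by
  have key : Continuous fun c => ∫ s in r..R, hfun H c (max s r) := by
    apply intervalIntegral.continuous_parametric_intervalIntegral_of_continuous'
    have hc : Continuous fun p : ℝ × ℝ => hfun H p.1 (max p.2 r) := by
      unfold hfun
      apply Continuous.div
      · fun_prop
      · fun_prop
      · intro p
        have h1 : r ≤ max p.2 r := le_max_right _ _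
        have h2 : 0 < max p.2 r := lt_of_lt_of_le hr h1
        have : (0:ℝ) < (max p.2 r) ^ 2 + (H * (max p.2 r) ^ 2 - p.1) ^ 2 := by positivity
        exact ne_of_gt (Real.sqrt_pos.2 this)
    exact hc
  convert key using 2 with c
  apply intervalIntegral.integral_congr
  intro s hs
  rw [Set.uIcc_of_le hrR] at hs
  show hfun H c s = hfun H c (max s r)
  rw [max_eq_left hs.1]

-- strict antitonicity
lemma G_strictAnti {H r R : ℝ} (hr : 0 < r) (hrR : r < R) :
    StrictAnti fun c => ∫ s in r..R, hfun H c s := by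
  intro c₁ c₂ h
  have hpos : 0 < ∫ s in r..R, (hfun H c₁ s - hfun H c₂ s) := by
    apply intervalIntegral.intervalIntegral_pos_of_pos_on
    · exact (hfun_integrable hr hrR.le).sub (hfun_integrable hr hrR.le)
    · intro s hs
      have : 0 < s := lt_trans hr hs.1
      linarith [hfun_anti (H := H) this h]
    · exact hrR
  rw [intervalIntegral.integral_sub (hfun_integrable hr hrR.le)
    (hfun_integrable hr hrR.le)] at hpos
  linarith

lemma G_zero {H r R : ℝ} (hr : 0 < r) (hrR : r ≤ R) (hH : 0 < H) :
    ∫ s in r..R, hfun H 0 s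
      = (Real.sqrt (1 + H ^ 2 * R ^ 2) - Real.sqrt (1 + H ^ 2 * r ^ 2)) / H := by
  have key : ∀ s ∈ Set.uIcc r R,
      HasDerivAt (fun t => Real.sqrt (1 + H ^ 2 * t ^ 2) / H) (hfun H 0 s) s := by
    intro s hs
    rw [Set.uIcc_of_le hrR] at hs
    have hs0 : 0 < s := lt_of_lt_of_le hr hs.1
    have hu : HasDerivAt (fun t : ℝ => 1 + H ^ 2 * t ^ 2) (H ^ 2 * (2 * s)) s := by
      simpa using ((hasDerivAt_pow 2 s).const_mul (H ^ 2)).const_add 1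
    have hpos : (0:ℝ) < 1 + H ^ 2 * s ^ 2 := by positivity
    have hsq := (hu.sqrt (ne_of_gt hpos)).div_const H
    convert hsq using 1; rfl; rfl
    have h1 : Real.sqrt (s ^ 2 + (H * s ^ 2 - 0) ^ 2) = s * Real.sqrt (1 + H ^ 2 * s ^ 2) := by
      rw [show s ^ 2 + (H * s ^ 2 - 0) ^ 2 = s ^ 2 * (1 + H ^ 2 * s ^ 2) by ring,
        Real.sqrt_mul (sq_nonneg s), Real.sqrt_sq hs0.le]
    have hsqrt : Real.sqrt (1 + H ^ 2 * s ^ 2) ≠ 0 := ne_of_gt (Real.sqrt_pos.2 hpos)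
    rw [hfun, h1]
    field_simp
    ring
  rw [intervalIntegral.integral_eq_sub_of_hasDerivAt key (hfun_integrable hr hrR)]
  ring

lemma G_zero_gt {r R a b H : ℝ} (hr : 0 < r) (hrR : r < R)
    (hab : |b - a| < R - r) (hH : 0 < H)
    (hH0 : H > 2 * (b - a) /
      Real.sqrt (((R - r) ^ 2 - (b - a) ^ 2) * ((R + r) ^ 2 - (b - a) ^ 2))) :
    b - a < (Real.sqrt (1 + H ^ 2 * R ^ 2) - Real.sqrt (1 + H ^ 2 * r ^ 2)) / H := by
  set d := b - a with hd
  obtain ⟨hab1, hab2⟩ := abs_lt.mp hab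
  have hA2 : Real.sqrt (1 + H ^ 2 * R ^ 2) ^ 2 = 1 + H ^ 2 * R ^ 2 :=
    Real.sq_sqrt (by positivity)
  have hB2 : Real.sqrt (1 + H ^ 2 * r ^ 2) ^ 2 = 1 + H ^ 2 * r ^ 2 :=
    Real.sq_sqrt (by positivity)
  set A := Real.sqrt (1 + H ^ 2 * R ^ 2) with hA
  set B := Real.sqrt (1 + H ^ 2 * r ^ 2) with hB
  have hApos : 0 < A := Real.sqrt_pos.2 (by positivity)
  have hBpos : 0 < B := Real.sqrt_pos.2 (by positivity)
  have hBA : B < A := by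
    apply Real.sqrt_lt_sqrt (by positivity)
    have h : r ^ 2 < R ^ 2 := by nlinarith
    nlinarith [mul_lt_mul_of_pos_left h (pow_pos hH 2)]
  rcases le_or_gt d 0 with hd0 | hd0
  · have : 0 < (A - B) / H := div_pos (by linarith) hH
    linarith
  · -- d > 0 case
    have hP1 : 0 < (R - r) ^ 2 - d ^ 2 := by nlinarith
    have hP2 : 0 < (R + r) ^ 2 - d ^ 2 := by nlinarith
    have hP : 0 < ((R - r) ^ 2 - d ^ 2) * ((R + r) ^ 2 - d ^ 2) := mul_pos hP1 hP2
    have hsP : 0 < Real.sqrt (((R - r) ^ 2 - d ^ 2) * ((R + r) ^ 2 - d ^ 2)) :=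
      Real.sqrt_pos.2 hP
    have h1 : 2 * d < H * Real.sqrt (((R - r) ^ 2 - d ^ 2) * ((R + r) ^ 2 - d ^ 2)) := by
      rw [gt_iff_lt, div_lt_iff₀ hsP] at hH0
      linarith
    have h2 : 4 * d ^ 2 < H ^ 2 * (((R - r) ^ 2 - d ^ 2) * ((R + r) ^ 2 - d ^ 2)) := by
      have h1' := pow_lt_pow_left₀ h1 (by positivity : (0:ℝ) ≤ 2 * d) two_ne_zero
      rw [mul_pow, mul_pow, Real.sq_sqrt hP.le] at h1'
      nlinarith [h1']
    have hM : 0 < R ^ 2 - r ^ 2 - d ^ 2 := by nlinarith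
    have idP : (R ^ 2 - r ^ 2 - d ^ 2) ^ 2
        = ((R - r) ^ 2 - d ^ 2) * ((R + r) ^ 2 - d ^ 2) + 4 * d ^ 2 * r ^ 2 := by ring
    have step1 : 2 * d * B < H * (R ^ 2 - r ^ 2 - d ^ 2) := by
      apply lt_of_pow_lt_pow_left₀ 2 (mul_nonneg hH.le hM.le)
      rw [mul_pow, mul_pow, hB2, mul_pow, idP]
      linarith [h2]
    have step2 : (H * d + B) ^ 2 < A ^ 2 := by
      rw [hA2]
      have h3 := mul_lt_mul_of_pos_left step1 hH
      linarith [h3, hB2]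
    have step3 : H * d + B < A := lt_of_pow_lt_pow_left₀ 2 hApos.le step2
    rw [lt_div_iff₀ hH]
    linarith

lemma phi_mono_le {k x y : ℝ} (hk : 0 < k) (hxy : x ≤ y) :
    x / Real.sqrt (k + x ^ 2) ≤ y / Real.sqrt (k + y ^ 2) := by
  rcases eq_or_lt_of_le hxy with rfl | h
  · exact le_refl _
  · exact (phi_mono hk h).le

lemma G_big {r R a b H : ℝ} (hr : 0 < r) (hrR : r < R) (hab : |b - a| < R - r)
    (hH : 0 < H) :
    ∃ c₀ : ℝ, 0 < c₀ ∧ (∫ s in r..R, hfun H c₀ s) < b - a := by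
  obtain ⟨hab1, hab2⟩ := abs_lt.mp hab
  set ε := (b - a) + (R - r) with hε
  have hεpos : 0 < ε := by simp only [hε]; linarith
  set u := Real.sqrt ((R - r) * R ^ 2 / ε) + 1 with hu_def
  have hu : 0 < u := by positivity
  have hu2 : (R - r) * R ^ 2 < ε * u ^ 2 := by
    have h1 : Real.sqrt ((R - r) * R ^ 2 / ε) < u := by simp [hu_def]
    have h2 : (R - r) * R ^ 2 / ε < u ^ 2 := by
      calc (R - r) * R ^ 2 / ε = Real.sqrt ((R - r) * R ^ 2 / ε) ^ 2 := by
            rw [Real.sq_sqrt (div_nonneg (mul_nonneg (by linarith) (sq_nonneg R)) hεpos.le)]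
        _ < u ^ 2 := by
            apply pow_lt_pow_left₀ h1 (Real.sqrt_nonneg _) two_ne_zero
    calc (R - r) * R ^ 2 = ((R - r) * R ^ 2 / ε) * ε := by field_simp
      _ < u ^ 2 * ε := by exact mul_lt_mul_of_pos_right h2 hεpos
      _ = ε * u ^ 2 := by ring
  set D := Real.sqrt (R ^ 2 + u ^ 2) with hD_def
  have hD : 0 < D := Real.sqrt_pos.2 (by positivity)
  have hD2 : D ^ 2 = R ^ 2 + u ^ 2 := Real.sq_sqrt (by positivity)
  have hDu : u ≤ D := by
    rw [hD_def]
    calc u = Real.sqrt (u ^ 2) := (Real.sqrt_sq hu.le).symm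
      _ ≤ _ := Real.sqrt_le_sqrt (by nlinarith)
  refine ⟨H * R ^ 2 + u, by positivity, ?_⟩
  set c₀ := H * R ^ 2 + u with hc₀
  -- pointwise bound
  have hbd : ∀ s ∈ Set.Icc r R, hfun H c₀ s ≤ -u / D := by
    intro s hs
    have hs0 : 0 < s := lt_of_lt_of_le hr hs.1
    have hx : H * s ^ 2 - c₀ ≤ -u := by
      have : H * s ^ 2 ≤ H * R ^ 2 :=
        mul_le_mul_of_nonneg_left (pow_le_pow_left₀ hs0.le hs.2 2) hH.le
      simp only [hc₀]; linarith
    have step1 : hfun H c₀ s ≤ -u / Real.sqrt (s ^ 2 + (-u) ^ 2) := by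
      have := phi_mono_le (k := s ^ 2) (by positivity) hx
      simpa [hfun] using this
    have step2 : -u / Real.sqrt (s ^ 2 + (-u) ^ 2) ≤ -u / D := by
      rw [neg_div, neg_div, neg_le_neg_iff]
      apply div_le_div_of_nonneg_left hu.le (Real.sqrt_pos.2 (by positivity))
      rw [hD_def]
      apply Real.sqrt_le_sqrt
      nlinarith [hs.2, hs0]
    linarith
  have hint : (∫ s in r..R, hfun H c₀ s) ≤ (R - r) * (-u / D) := by
    have h1 : (∫ s in r..R, hfun H c₀ s) ≤ ∫ _ in r..R, (-u / D) := by
      apply intervalIntegral.integral_mono_on hrR.le (hfun_integrable hr hrR.le)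
        intervalIntegrable_const
      exact hbd
    rwa [intervalIntegral.integral_const, smul_eq_mul] at h1
  have hfinal : (R - r) * (-u / D) < b - a := by
    rw [show (R - r) * (-u / D) = (-((R - r) * u)) / D by ring, div_lt_iff₀ hD]
    have hba : b - a = ε - (R - r) := by rw [hε]; ring
    have h5 : (R - r) * D ^ 2 = (R - r) * (R ^ 2 + u ^ 2) := by rw [hD2]
    have h_a : 0 < ε * (D * u) := mul_pos hεpos (mul_pos hD hu)
    have h_b : ε * u ^ 2 ≤ ε * D ^ 2 :=
      mul_le_mul_of_nonneg_left (pow_le_pow_left₀ hu.le hDu 2) hεpos.le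
    have hN : 0 < ((b - a) * D + (R - r) * u) * (D + u) := by
      rw [hba]
      nlinarith [h5, hu2, h_a, h_b]
    have hN2 : 0 < (b - a) * D + (R - r) * u := by
      by_contra hcon
      push_neg at hcon
      nlinarith [add_pos hD hu]
    linarith
  linarith

/-- Proposition for `c > 0`: let `0 < r < R` and `|b − a| < R − r`, and let
`H₀ = 2(b − a)/√(((R − r)² − (b − a)²)·((R + r)² − (b − a)²))`.  Then for every `H > 0` with
`H > H₀` there exists a unique `c > 0` such that the profile `f(t; H, c)` with `f(r) = a`
satisfies `f(R; H, c) = b`: there is a unique rotational spacelike surface with constant mean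
curvature `H`, corresponding to a positive first-integral constant `c`, spanning `Γ(r, a)`
and `Γ(R, b)`. -/
theorem existence_positive_c (r R a b H : ℝ) (hr : 0 < r) (hrR : r < R)
    (hab : |b - a| < R - r) (hH : 0 < H)
    (hH0 : H > 2 * (b - a) /
      Real.sqrt (((R - r) ^ 2 - (b - a) ^ 2) * ((R + r) ^ 2 - (b - a) ^ 2))) :
    ∃! c : ℝ, 0 < c ∧ ffun H c r a R = b := by
  set G := fun c => ∫ s in r..R, hfun H c s with hG
  have hiff : ∀ c, ffun H c r a R = b ↔ G c = b - a := by
    intro c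
    unfold ffun
    constructor <;> intro h <;> [skip; skip] <;> simp only [hG] at * <;> linarith
  have hanti : StrictAnti G := G_strictAnti hr hrR
  have hG0 : b - a < G 0 := by
    rw [hG]
    simp only
    rw [G_zero hr hrR.le hH]
    exact G_zero_gt hr hrR hab hH hH0
  obtain ⟨c₀, hc₀pos, hc₀⟩ := G_big hr hrR hab hH
  have hcont : Continuous G := G_continuous hr hrR.le
  have hsub := intermediate_value_Icc' hc₀pos.le hcont.continuousOn
    (a := (0:ℝ)) (b := c₀)
  have hmem : b - a ∈ Set.Icc (G c₀) (G 0) := ⟨hc₀.le, hG0.le⟩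
  obtain ⟨c, hcIcc, hGc⟩ := hsub hmem
  have hcpos : 0 < c := by
    rcases eq_or_lt_of_le hcIcc.1 with h0 | h0
    · exfalso; rw [← h0] at hGc; rw [hGc] at hG0; exact lt_irrefl _ hG0
    · exact h0
  refine ⟨c, ⟨hcpos, (hiff c).2 hGc⟩, ?_⟩
  intro c' ⟨hc'pos, hc'⟩
  have : G c' = G c := by rw [hGc]; exact (hiff c').1 hc'
  exact hanti.injective this
end
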